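/- Let $R$ be a commutative ring, $M$ a finitely generated projective $R$-module, and $s \in M$. Consider the Koszul complex on the map $M^* \to R$, $\psi \mapsto \psi(s)$ (exterior algebra $\Lambda^\bullet M^*$ with differential contraction against $s$). If the image ideal $I = \{\psi(s) : \psi \in M^*\}$ equals $R$ (i.e. $s$ is nowhere vanishing), then the Koszul complex is exact, i.e. its homology vanishes in all degrees. -/
import Mathlib


open ExteriorAlgebra

theorem contract_iMulti_aux {R M : Type*} [CommRing R] [AddCommGroup M] [Module R M]
    (e : Module.Dual R M) (n : ℕ) (ψ : Fin (n+1) → M) :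
    CliffordAlgebra.contractLeft (Q := (0 : QuadraticForm R M)) e (ιMulti R (n+1) ψ) =
      ∑ i : Fin (n + 1), ((-1 : R) ^ (i : ℕ) * e (ψ i)) •
          ιMulti R n (fun j => ψ (i.succAbove j)) := by
  induction n with
  | zero =>
      simp [ιMulti_succ_apply, CliffordAlgebra.contractLeft_ι_mul, ιMulti_zero_apply,
        CliffordAlgebra.contractLeft_one, Algebra.algebraMap_eq_smul_one]
  | succ n ih =>
      have key : ∀ j : Fin (n+1),
          (ιMulti R (n+1) fun k => ψ (j.succ.succAbove k)) =
            ι R (ψ 0) * ιMulti R n fun k => ψ ((j.succAbove k).succ) := by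
        intro j
        rw [ιMulti_succ_apply, Fin.succ_succAbove_zero]
        have harg : (Matrix.vecTail fun k => ψ (j.succ.succAbove k))
            = fun k => ψ ((j.succAbove k).succ) := by
          funext k
          simp [Matrix.vecTail, Function.comp_def, Fin.succ_succAbove_succ]
        rw [harg]
      conv_rhs => rw [Fin.sum_univ_succ]
      simp only [key, Fin.val_zero, pow_zero, one_mul, Fin.succAbove_zero, Fin.val_succ]
      rw [ιMulti_succ_apply, CliffordAlgebra.contractLeft_ι_mul, ih]
      rw [Finset.mul_sum, sub_eq_add_neg, ← Finset.sum_neg_distrib]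
      congr 1
      apply Finset.sum_congr rfl
      intro j _
      rw [mul_smul_comm, ← neg_smul]
      congr 1
      show -((-1:R) ^ (j:ℕ) * e (ψ j.succ)) = (-1:R) ^ ((j:ℕ) + 1) * e (ψ j.succ)
      ring

/-- If a section `s` of a finitely generated projective module is nowhere vanishing
(the evaluation `M^* → R` at `s` is surjective), then the Koszul complex
`(Λ^• M^*, contraction against s)` is exact: `ker d = im d`. -/
theorem stmt_5 {R M : Type*} [CommRing R] [AddCommGroup M] [Module R M]
    [Module.Finite R M] [Module.Projective R M] (s : M)
    (hs : Function.Surjective (fun ψ : Module.Dual R M => ψ s))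
    (d : ExteriorAlgebra R (Module.Dual R M) →ₗ[R] ExteriorAlgebra R (Module.Dual R M))
    (hd0 : ∀ r : R, d (algebraMap R (ExteriorAlgebra R (Module.Dual R M)) r) = 0)
    (hd : ∀ (n : ℕ) (ψ : Fin (n + 1) → Module.Dual R M),
      d (ιMulti R (n + 1) ψ) =
        ∑ i : Fin (n + 1), ((-1 : R) ^ (i : ℕ) * ψ i s) •
          ιMulti R n (fun j => ψ (i.succAbove j))) :
    LinearMap.ker d = LinearMap.range d := by
  set e : Module.Dual R (Module.Dual R M) := Module.Dual.eval R M s with he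
  set c : ExteriorAlgebra R (Module.Dual R M) →ₗ[R] ExteriorAlgebra R (Module.Dual R M) :=
    CliffordAlgebra.contractLeft (Q := (0 : QuadraticForm R (Module.Dual R M))) e with hc
  have hdc : d = c := by
    apply LinearMap.ext_on (ExteriorAlgebra.ιMulti_span (R := R) (M := Module.Dual R M))
    rintro _ ⟨⟨n, ψ⟩, rfl⟩
    cases n with
    | zero =>
        show d (ιMulti R 0 ψ) = c (ιMulti R 0 ψ)
        have h1 : ιMulti R 0 ψ = algebraMap R (ExteriorAlgebra R (Module.Dual R M)) 1 := by
          rw [ιMulti_zero_apply, map_one]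
        rw [h1, hd0]
        exact (CliffordAlgebra.contractLeft_algebraMap (Q := (0 : QuadraticForm R (Module.Dual R M))) (d := e) (r := 1)).symm
    | succ n =>
        show d (ιMulti R (n+1) ψ) = c (ιMulti R (n+1) ψ)
        rw [hd, hc, contract_iMulti_aux]
        rfl
  apply le_antisymm
  · intro x hx
    obtain ⟨ψ₀, hψ₀⟩ := hs 1
    refine ⟨ι R ψ₀ * x, ?_⟩
    rw [hdc, hc]
    rw [CliffordAlgebra.contractLeft_ι_mul]
    have hcx : c x = 0 := by rw [← hdc]; exact hx
    rw [← hc, hcx, mul_zero, sub_zero]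
    have : e ψ₀ = 1 := hψ₀
    rw [this, one_smul]
  · rintro _ ⟨y, rfl⟩
    show d (d y) = 0
    rw [hdc, hc]
    exact CliffordAlgebra.contractLeft_contractLeft (Q := (0 : QuadraticForm R (Module.Dual R M))) (d := e) y
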